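/- Let 0 < δ < 1, w > e, and K ≥ max{ (2log(2·#P) + 2log(1/δ)) / log(w/e), 3 }. Define the relative estimator Δ^rel(μ) = √( ∑ᵢ(Zᵢᵀ(u(μ)−ũ(μ)))² / ∑ᵢ(Zᵢᵀu(μ))² ). Then with probability at least 1−δ, w⁻¹Δ^rel(μ) ≤ ‖u(μ)−ũ(μ)‖_Σ/‖u(μ)‖_Σ ≤ wΔ^rel(μ) simultaneously for all μ in the finite set P. -/

import Mathlib

/-!
For a fixed vector `a`, the variables `Zᵢᵀa` are i.i.d. `N(0, ‖a‖²_Σ)`, so `∑ᵢ (Zᵢᵀa)²` is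
`‖a‖²_Σ` times a `χ²_K` variable, whose moment generating function is `(1 - 2t)^(-K/2)`. The
Chernoff bounds for its two tails add up to at most `(e/w)^(K/2)` as soon as `w > e` and `K ≥ 3`.
Applied to `a = u(μ) - ũ(μ)` and to `a = u(μ)` for every `μ ∈ P`, a union bound over these
`2·#P` events and the choice of `K` leave a failure probability of at most `δ`; outside of it both
sums are within a factor `w` of `K‖a‖²_Σ`, so their ratio is within `w²` of the squared ratio of
the norms.
-/

open MeasureTheory ProbabilityTheory Real Matrix
open scoped NNReal ENNReal

lemma integral_exp_mul_sq_gaussianReal {v : ℝ≥0} {t : ℝ} (ht : 2 * t * v < 1) :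
    ∫ x, exp (t * x ^ 2) ∂gaussianReal 0 v = (√(1 - 2 * t * v))⁻¹ := by
  rcases eq_or_ne v 0 with rfl | hv
  · simp [gaussianReal_zero_var]
  have hv0 : (0 : ℝ) < v := by positivity
  obtain ⟨b, hb, hvb⟩ : ∃ b : ℝ, 0 < b ∧ 2 * v * b = 1 - 2 * t * v :=
    ⟨(1 - 2 * t * v) / (2 * v), div_pos (by linarith) (by positivity), by field_simp⟩
  have hpdf : ∀ x, gaussianPDFReal 0 v x • exp (t * x ^ 2)
      = (√(2 * π * v))⁻¹ * exp (-b * x ^ 2) := by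
    intro x
    rw [gaussianPDFReal, smul_eq_mul, mul_assoc, ← exp_add]
    congr 2
    field_simp
    linear_combination x ^ 2 * hvb
  rw [integral_gaussianReal_eq_integral_smul hv]
  simp_rw [hpdf]
  rw [integral_const_mul, integral_gaussian, ← sqrt_inv, ← sqrt_mul (by positivity), ← sqrt_inv,
    ← hvb]
  congr 1
  field_simp

section SumOfSquares

variable {Ω ι : Type*} [MeasurableSpace Ω] {Pr : Measure Ω} [Fintype ι]
  {X : ι → Ω → ℝ} {v : ℝ≥0} {t w : ℝ}

lemma mgf_sq_of_map_eq_gaussianReal {Y : Ω → ℝ} (hY : Measurable Y)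
    (hlaw : Pr.map Y = gaussianReal 0 v) (ht : 2 * t * v < 1) :
    mgf (Y ^ 2) Pr t = (√(1 - 2 * t * v))⁻¹ := by
  rw [mgf, ← integral_exp_mul_sq_gaussianReal ht, ← hlaw,
    integral_map hY.aemeasurable (by fun_prop)]
  rfl

lemma mgf_sum_sq_of_map_eq_gaussianReal (hX : ∀ i, Measurable (X i)) (hindep : iIndepFun X Pr)
    (hlaw : ∀ i, Pr.map (X i) = gaussianReal 0 v) (ht : 2 * t * v < 1) :
    mgf (∑ i, X i ^ 2) Pr t = (√(1 - 2 * t * v))⁻¹ ^ Fintype.card ι := by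
  have hindep_sq : iIndepFun (fun i => X i ^ 2) Pr := by
    exact hindep.comp (fun _ (x : ℝ) => x ^ 2) fun _ => measurable_id.pow_const 2
  rw [hindep_sq.mgf_sum (fun i => (hX i).pow_const 2),
    Finset.prod_congr rfl fun i _ => mgf_sq_of_map_eq_gaussianReal (hX i) (hlaw i) ht]
  simp

lemma integrable_exp_mul_sum_sq_of_map_eq_gaussianReal (hX : ∀ i, Measurable (X i))
    (hindep : iIndepFun X Pr) (hlaw : ∀ i, Pr.map (X i) = gaussianReal 0 v) (ht : 2 * t * v < 1) :
    Integrable (fun ω => exp (t * (∑ i, X i ^ 2) ω)) Pr := by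
  refine .of_integral_ne_zero ?_
  rw [← mgf, mgf_sum_sq_of_map_eq_gaussianReal hX hindep hlaw ht]
  exact pow_ne_zero _ (inv_ne_zero (sqrt_ne_zero'.mpr (by linarith)))

variable [IsProbabilityMeasure Pr]

lemma measureReal_sum_sq_ge_le (hX : ∀ i, Measurable (X i)) (hindep : iIndepFun X Pr)
    (hlaw : ∀ i, Pr.map (X i) = gaussianReal 0 v) (hv : v ≠ 0) (hw : 1 < w) :
    Pr.real {ω | Fintype.card ι * w * v ≤ (∑ i, X i ^ 2) ω}
      ≤ (√w * exp ((1 - w) / 2)) ^ Fintype.card ι := by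
  have hw0 : 0 < w := by linarith
  obtain ⟨t, ht0, htv⟩ : ∃ t : ℝ, 0 ≤ t ∧ 2 * t * v = 1 - w⁻¹ :=
    ⟨(1 - w⁻¹) / (2 * v), by have := inv_le_one_of_one_le₀ hw.le; positivity, by field_simp⟩
  have ht : 2 * t * v < 1 := by linarith [inv_pos.mpr hw0]
  refine (measure_ge_le_exp_mul_mgf _ ht0
    (integrable_exp_mul_sum_sq_of_map_eq_gaussianReal hX hindep hlaw ht)).trans_eq ?_
  rw [mgf_sum_sq_of_map_eq_gaussianReal hX hindep hlaw ht, htv, sub_sub_cancel, sqrt_inv, inv_inv,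
    mul_pow, ← exp_nat_mul, mul_comm]
  congr 2
  have htvw : 2 * t * v * w = w - 1 := by rw [htv]; field_simp
  linear_combination (-Fintype.card ι / 2 : ℝ) * htvw

lemma measureReal_sum_sq_le_le (hX : ∀ i, Measurable (X i)) (hindep : iIndepFun X Pr)
    (hlaw : ∀ i, Pr.map (X i) = gaussianReal 0 v) (hv : v ≠ 0) (hw : 1 < w) :
    Pr.real {ω | (∑ i, X i ^ 2) ω ≤ Fintype.card ι * v / w}
      ≤ ((√w)⁻¹ * exp ((w - 1) / (2 * w))) ^ Fintype.card ι := by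
  have hw0 : 0 < w := by linarith
  obtain ⟨t, ht0, htv⟩ : ∃ t : ℝ, t ≤ 0 ∧ 2 * t * v = 1 - w :=
    ⟨(1 - w) / (2 * v), div_nonpos_of_nonpos_of_nonneg (by linarith) (by positivity),
      by field_simp⟩
  have ht : 2 * t * v < 1 := by linarith
  refine (measure_le_le_exp_mul_mgf _ ht0
    (integrable_exp_mul_sum_sq_of_map_eq_gaussianReal hX hindep hlaw ht)).trans_eq ?_
  rw [mgf_sum_sq_of_map_eq_gaussianReal hX hindep hlaw ht, htv, sub_sub_cancel,
    mul_pow, ← exp_nat_mul, mul_comm]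
  congr 2
  field_simp
  linear_combination (-Fintype.card ι : ℝ) * htv

lemma measure_sum_sq_notMem_Icc_le (hX : ∀ i, Measurable (X i)) (hindep : iIndepFun X Pr)
    (hlaw : ∀ i, Pr.map (X i) = gaussianReal 0 v) (hw : 1 < w) :
    Pr {ω | ∑ i, X i ω ^ 2 ∉ Set.Icc (Fintype.card ι * v / w) (Fintype.card ι * w * v)}
      ≤ ENNReal.ofReal ((√w * exp ((1 - w) / 2)) ^ Fintype.card ι
          + ((√w)⁻¹ * exp ((w - 1) / (2 * w))) ^ Fintype.card ι) := by
  rcases eq_or_ne v 0 with rfl | hv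
  · have hX0 : ∀ i, ∀ᵐ ω ∂Pr, X i ω = 0 := fun i =>
      ae_of_ae_map (p := (· = 0)) (hX i).aemeasurable (by
        rw [hlaw i, gaussianReal_zero_var, ae_dirac_eq]; exact Filter.eventually_pure.2 rfl)
    refine le_of_eq_of_le (measure_eq_zero_iff_ae_notMem.2 ?_) zero_le
    filter_upwards [ae_all_iff.2 hX0] with ω hω
    simp [hω]
  have hsplit : {ω | ∑ i, X i ω ^ 2 ∉ Set.Icc (Fintype.card ι * v / w) (Fintype.card ι * w * v)}
      ⊆ {ω | Fintype.card ι * w * v ≤ (∑ i, X i ^ 2) ω}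
        ∪ {ω | (∑ i, X i ^ 2) ω ≤ Fintype.card ι * v / w} := by
    intro ω hω
    simp only [Set.mem_ofPred_eq, Set.mem_Icc, not_and_or, not_le] at hω
    simp only [Set.mem_union, Set.mem_ofPred_eq, Finset.sum_apply, Pi.pow_apply]
    exact hω.symm.imp le_of_lt le_of_lt
  refine (measure_mono hsplit).trans ((measure_union_le _ _).trans ?_)
  rw [ENNReal.ofReal_add (by positivity) (by positivity), ← ofReal_measureReal,
    ← ofReal_measureReal]
  gcongr
  exacts [measureReal_sum_sq_ge_le hX hindep hlaw hv hw,
    measureReal_sum_sq_le_le hX hindep hlaw hv hw]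

end SumOfSquares

lemma le_exp_div_exp_one (w : ℝ) : w ≤ exp (w / exp 1) := by
  have h := add_one_le_exp (w / exp 1 - 1)
  rwa [sub_add_cancel, exp_sub, le_div_iff₀ (exp_pos 1), div_mul_cancel₀ _ (exp_pos 1).ne'] at h

section Numerics

variable {w : ℝ}

lemma mul_exp_neg_half_pow_three_le (hw : exp 1 < w) : (w * exp (-(w / 2))) ^ 3 ≤ w⁻¹ := by
  have hw0 : 0 < w := (exp_pos 1).trans hw
  have he : (8 : ℝ) / 3 < exp 1 := by linarith [exp_one_gt_d9]
  have hpow : w ^ 4 ≤ exp (3 * w / 2) :=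
    calc w ^ 4 ≤ exp (w / exp 1) ^ 4 := by gcongr; exact le_exp_div_exp_one w
      _ = exp (4 * w / exp 1) := by rw [← exp_nat_mul]; ring_nf
      _ ≤ exp (3 * w / 2) :=
        exp_le_exp.2 (by rw [div_le_div_iff₀ (exp_pos 1) two_pos]; nlinarith)
  calc (w * exp (-(w / 2))) ^ 3 = w ^ 4 * exp (-(3 * w / 2)) / w := by
        rw [mul_pow, ← exp_nat_mul]; field_simp; ring_nf
    _ ≤ exp (3 * w / 2) * exp (-(3 * w / 2)) / w := by gcongr
    _ = w⁻¹ := by rw [← exp_add, add_neg_cancel, exp_zero, one_div]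

lemma exp_neg_inv_two_mul_pow_three_le (hw : exp 1 < w) : exp (-(2 * w)⁻¹) ^ 3 ≤ 1 - w⁻¹ := by
  have hw0 : 0 < w := (exp_pos 1).trans hw
  set s : ℝ := 3 / (2 * w) with hs
  have hs0 : 0 ≤ s := by positivity
  have hs1 : s ≤ 3 / 5 := by
    rw [hs, div_le_div_iff₀ (by positivity) (by norm_num)]; linarith [exp_one_gt_d9]
  have hws : w⁻¹ = 2 / 3 * s := by rw [hs]; field_simp
  rw [← exp_nat_mul, show ((3 : ℕ) : ℝ) * -(2 * w)⁻¹ = -s by rw [hs]; push_cast; field_simp,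
    Real.exp_neg, hws, inv_le_iff_one_le_mul₀ (exp_pos s)]
  -- `1 ≤ (1 - 2s/3)(1 + s + s²/2)` holds for `0 ≤ s ≤ 3/5`
  have := quadratic_le_exp_of_nonneg hs0
  nlinarith

lemma mul_exp_neg_half_pow_add_exp_neg_inv_pow_le_one (hw : exp 1 < w) {K : ℕ} (hK : 3 ≤ K) :
    (w * exp (-(w / 2))) ^ K + exp (-(2 * w)⁻¹) ^ K ≤ 1 := by
  have hw0 : 0 < w := (exp_pos 1).trans hw
  have ha : w * exp (-(w / 2)) ≤ 1 := by
    have : w⁻¹ < 1 := inv_lt_one_of_one_lt₀ (by linarith [add_one_le_exp 1])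
    refine le_of_pow_le_pow_left₀ three_ne_zero zero_le_one ?_
    rw [one_pow]
    exact (mul_exp_neg_half_pow_three_le hw).trans this.le
  have hb : exp (-(2 * w)⁻¹) ≤ 1 := exp_le_one_iff.2 (by simp; positivity)
  calc (w * exp (-(w / 2))) ^ K + exp (-(2 * w)⁻¹) ^ K
      ≤ (w * exp (-(w / 2))) ^ 3 + exp (-(2 * w)⁻¹) ^ 3 :=
        add_le_add (pow_le_pow_of_le_one (by positivity) ha hK)
          (pow_le_pow_of_le_one (by positivity) hb hK)
    _ ≤ w⁻¹ + (1 - w⁻¹) :=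
        add_le_add (mul_exp_neg_half_pow_three_le hw) (exp_neg_inv_two_mul_pow_three_le hw)
    _ = 1 := add_sub_cancel _ _

lemma chernoff_tails_pow_add_le (hw : exp 1 < w) {K : ℕ} (hK : 3 ≤ K) :
    (√w * exp ((1 - w) / 2)) ^ K + ((√w)⁻¹ * exp ((w - 1) / (2 * w))) ^ K
      ≤ √(exp 1 / w) ^ K := by
  have hw0 : 0 < w := (exp_pos 1).trans hw
  have hq : √(exp 1 / w) = exp (1 / 2) * (√w)⁻¹ := by
    rw [sqrt_div' _ hw0.le, ← exp_half, div_eq_mul_inv]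
  have hupper : √w * exp ((1 - w) / 2) = √(exp 1 / w) * (w * exp (-(w / 2))) := by
    rw [hq]
    field_simp
    rw [sq_sqrt hw0.le, mul_assoc, ← exp_add]
    ring_nf
  have hlower : (√w)⁻¹ * exp ((w - 1) / (2 * w)) = √(exp 1 / w) * exp (-(2 * w)⁻¹) := by
    rw [hq, mul_comm (exp _), mul_assoc, ← exp_add]
    congr 2
    field_simp
    ring
  rw [hupper, hlower, mul_pow (√(exp 1 / w)), mul_pow (√(exp 1 / w)), ← mul_add]
  exact mul_le_of_le_one_right (by positivity)
    (mul_exp_neg_half_pow_add_exp_neg_inv_pow_le_one hw hK)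

end Numerics

lemma measure_sum_sq_notMem_Icc_le_sqrt_exp_one_div_pow {Ω ι : Type*} [MeasurableSpace Ω]
    {Pr : Measure Ω} [IsProbabilityMeasure Pr] [Fintype ι] {X : ι → Ω → ℝ} {v : ℝ≥0} {w : ℝ}
    (hX : ∀ i, Measurable (X i)) (hindep : iIndepFun X Pr)
    (hlaw : ∀ i, Pr.map (X i) = gaussianReal 0 v) (hw : exp 1 < w) (hK : 3 ≤ Fintype.card ι) :
    Pr {ω | ∑ i, X i ω ^ 2 ∉ Set.Icc (Fintype.card ι * v / w) (Fintype.card ι * w * v)}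
      ≤ ENNReal.ofReal (√(exp 1 / w) ^ Fintype.card ι) :=
  (measure_sum_sq_notMem_Icc_le hX hindep hlaw ((one_lt_exp_iff.2 one_pos).trans hw)).trans
    (ENNReal.ofReal_le_ofReal (chernoff_tails_pow_add_le hw hK))

lemma measure_iUnion_union_le {Ω P : Type*} [MeasurableSpace Ω] {Pr : Measure Ω} [Fintype P]
    {A B : P → Set Ω} {q : ℝ} (hq : 0 ≤ q) (hA : ∀ μ, Pr (A μ) ≤ ENNReal.ofReal q)
    (hB : ∀ μ, Pr (B μ) ≤ ENNReal.ofReal q) :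
    Pr (⋃ μ, A μ ∪ B μ) ≤ ENNReal.ofReal (2 * Fintype.card P * q) :=
  calc Pr (⋃ μ, A μ ∪ B μ)
      ≤ ∑ μ, (Pr (A μ) + Pr (B μ)) :=
        (measure_iUnion_fintype_le _ _).trans (Finset.sum_le_sum fun μ _ => measure_union_le _ _)
    _ ≤ ∑ _μ : P, (ENNReal.ofReal q + ENNReal.ofReal q) :=
        Finset.sum_le_sum fun μ _ => add_le_add (hA μ) (hB μ)
    _ = ENNReal.ofReal (2 * Fintype.card P * q) := by
        rw [Finset.sum_const, Finset.card_univ, nsmul_eq_mul, ← ENNReal.ofReal_add hq hq,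
          ← ENNReal.ofReal_natCast, ← ENNReal.ofReal_mul (Nat.cast_nonneg _)]
        ring_nf

lemma two_mul_mul_sqrt_exp_one_div_pow_le {w δ : ℝ} {p K : ℕ} (hw : exp 1 < w) (hδ : 0 < δ)
    (hK : (2 * log (2 * (p : ℝ)) + 2 * log δ⁻¹) / log (w / exp 1) ≤ K) :
    2 * p * √(exp 1 / w) ^ K ≤ δ := by
  rcases Nat.eq_zero_or_pos p with rfl | hp
  · simpa using hδ.le
  have hw0 : 0 < w := (exp_pos 1).trans hw
  set L := log (w / exp 1)
  have hL : 0 < L := log_pos ((one_lt_div (exp_pos 1)).2 hw)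
  have hq : √(exp 1 / w) ^ K = exp (-(K * L / 2)) := by
    have he : exp 1 / w = exp (-L) := by
      rw [Real.exp_neg, exp_log (div_pos hw0 (exp_pos 1)), inv_div]
    rw [he, ← exp_half, ← exp_nat_mul]
    ring_nf
  have hlog : log (2 * p / δ) ≤ K * L / 2 := by
    rw [div_le_iff₀ hL] at hK
    rw [div_eq_mul_inv, log_mul (by positivity) (by positivity)]
    linarith
  rw [hq, Real.exp_neg, ← div_eq_mul_inv, div_le_iff₀ (exp_pos _), ← div_le_iff₀' hδ]
  exact (log_le_iff_le_exp (by positivity)).1 hlog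

lemma sqrt_div_sqrt_mem_of_mem_Icc {w c a b A B : ℝ} (hw : 0 < w) (hc : 0 < c) (ha : 0 ≤ a)
    (hb : 0 < b) (hA : A ∈ Set.Icc (c * a / w) (c * w * a))
    (hB : B ∈ Set.Icc (c * b / w) (c * w * b)) :
    w⁻¹ * √(A / B) ≤ √a / √b ∧ √a / √b ≤ w * √(A / B) := by
  have hA0 : 0 ≤ A := le_trans (by positivity) hA.1
  have hB0 : 0 < B := lt_of_lt_of_le (by positivity) hB.1
  have hmul : ∀ x, w * √x = √(w ^ 2 * x) := fun x => by
    rw [sqrt_mul (sq_nonneg w), sqrt_sq hw.le]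
  rw [← sqrt_div ha, inv_mul_le_iff₀ hw, hmul, hmul]
  constructor
  · refine sqrt_le_sqrt ((div_le_div₀ (by positivity) hA.2 (by positivity) hB.1).trans_eq ?_)
    field_simp
  · refine sqrt_le_sqrt (le_of_eq_of_le ?_ (mul_le_mul_of_nonneg_left
      (div_le_div₀ hA0 hA.1 hB0 hB.2) (sq_nonneg w)))
    field_simp

lemma sqrt_coe_toNNReal (x : ℝ) : √(x.toNNReal : ℝ) = √x := by
  rw [Real.sqrt, Real.sqrt, Real.toNNReal_coe]

lemma ofReal_one_sub_le_of_measure_compl_le {Ω : Type*} [MeasurableSpace Ω] {μ : Measure Ω}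
    [IsProbabilityMeasure μ] {s : Set Ω} {δ : ℝ} (hδ : 0 ≤ δ) (h : μ sᶜ ≤ ENNReal.ofReal δ) :
    ENNReal.ofReal (1 - δ) ≤ μ s := by
  rw [ENNReal.ofReal_sub _ hδ, ENNReal.ofReal_one, tsub_le_iff_right, ← measure_univ (μ := μ)]
  exact (measure_univ_le_add_compl s).trans (add_le_add le_rfl h)

theorem stmt8_general {Ω : Type*} [MeasurableSpace Ω] (Pr : Measure Ω) [IsProbabilityMeasure Pr]
    (N K : ℕ)
    (S : Matrix (Fin N) (Fin N) ℝ)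
    (Z : Fin K → Ω → (Fin N → ℝ))
    (hmeas : ∀ i, Measurable (Z i))
    (hindep : iIndepFun Z Pr)
    (hgauss : ∀ i (a : Fin N → ℝ),
      Measure.map (fun ω => Z i ω ⬝ᵥ a) Pr
        = gaussianReal 0 (Real.toNNReal (a ⬝ᵥ S.mulVec a)))
    (P : Type*) [Fintype P]
    (u ut : P → (Fin N → ℝ))
    (hu : ∀ μ, 0 < Real.sqrt (u μ ⬝ᵥ S.mulVec (u μ)))
    (δ : ℝ) (hδ0 : 0 < δ)
    (w : ℝ) (hw : Real.exp 1 < w)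
    (hK : (2 * Real.log (2 * (Fintype.card P : ℝ)) + 2 * Real.log δ⁻¹)
            / Real.log (w / Real.exp 1) ≤ (K : ℝ))
    (hK3 : 3 ≤ K)
    (Δrel : P → Ω → ℝ)
    (hΔrel : ∀ μ ω, Δrel μ ω =
      Real.sqrt ((∑ i, (Z i ω ⬝ᵥ (u μ - ut μ)) ^ 2) / (∑ i, (Z i ω ⬝ᵥ u μ) ^ 2))) :
    ENNReal.ofReal (1 - δ) ≤
      Pr {ω | ∀ μ : P,
        w⁻¹ * Δrel μ ω ≤
          Real.sqrt ((u μ - ut μ) ⬝ᵥ S.mulVec (u μ - ut μ))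
            / Real.sqrt (u μ ⬝ᵥ S.mulVec (u μ))
        ∧ Real.sqrt ((u μ - ut μ) ⬝ᵥ S.mulVec (u μ - ut μ))
            / Real.sqrt (u μ ⬝ᵥ S.mulVec (u μ)) ≤ w * Δrel μ ω} := by
  set q := √(exp 1 / w) ^ K
  let bad : (Fin N → ℝ) → Set Ω := fun a => {ω | ∑ i, (Z i ω ⬝ᵥ a) ^ 2 ∉
    Set.Icc (K * ((a ⬝ᵥ S.mulVec a).toNNReal : ℝ) / w) (K * w * (a ⬝ᵥ S.mulVec a).toNNReal)}
  have hbad : ∀ a, Pr (bad a) ≤ ENNReal.ofReal q := fun a => by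
    have hdot : Measurable fun z : Fin N → ℝ => z ⬝ᵥ a :=
      (continuous_id.dotProduct continuous_const).measurable
    have := measure_sum_sq_notMem_Icc_le_sqrt_exp_one_div_pow (X := fun i ω => Z i ω ⬝ᵥ a)
      (fun i => hdot.comp (hmeas i)) (hindep.comp (fun _ => (· ⬝ᵥ a)) fun _ => hdot)
      (fun i => hgauss i a) hw (by simpa using hK3)
    rwa [Fintype.card_fin] at this
  have hunion : Pr (⋃ μ, bad (u μ - ut μ) ∪ bad (u μ)) ≤ ENNReal.ofReal δ :=
    (measure_iUnion_union_le (by positivity) (fun _ => hbad _) (fun _ => hbad _)).trans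
      (ENNReal.ofReal_le_ofReal (two_mul_mul_sqrt_exp_one_div_pow_le hw hδ0 hK))
  refine ofReal_one_sub_le_of_measure_compl_le hδ0.le
    ((measure_mono (Set.compl_subset_comm.1 fun ω hω μ => ?_)).trans hunion)
  simp only [Set.mem_compl_iff, Set.mem_iUnion, Set.mem_union, not_exists, not_or, bad,
    Set.mem_ofPred_eq, not_not] at hω
  simpa only [sqrt_coe_toNNReal, hΔrel] using sqrt_div_sqrt_mem_of_mem_Icc
    ((exp_pos 1).trans hw) (by positivity) NNReal.zero_le_coe
    (NNReal.coe_pos.2 (Real.toNNReal_pos.2 (sqrt_pos.1 (hu μ)))) (hω μ).1 (hω μ).2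

/-- Relative randomized error estimator: with Z₁,…,Z_K iid N(0,Σ),
Δʳᵉˡ(μ) = √(∑ᵢ(Zᵢᵀ(u(μ)−ũ(μ)))² / ∑ᵢ(Zᵢᵀu(μ))²), if w > e and
K ≥ max{(2log(2#P) + 2log(1/δ))/log(w/e), 3}, then with probability ≥ 1 − δ,
w⁻¹Δʳᵉˡ(μ) ≤ ‖u(μ)−ũ(μ)‖_Σ/‖u(μ)‖_Σ ≤ wΔʳᵉˡ(μ) for all μ ∈ P. -/
theorem stmt8 {Ω : Type*} [MeasurableSpace Ω] (Pr : Measure Ω) [IsProbabilityMeasure Pr]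
    (N K : ℕ)
    (S : Matrix (Fin N) (Fin N) ℝ) (hS : S.PosSemidef)
    (Z : Fin K → Ω → (Fin N → ℝ))
    (hmeas : ∀ i, Measurable (Z i))
    (hindep : iIndepFun Z Pr)
    (hgauss : ∀ i (a : Fin N → ℝ),
      Measure.map (fun ω => Z i ω ⬝ᵥ a) Pr
        = gaussianReal 0 (Real.toNNReal (a ⬝ᵥ S.mulVec a)))
    (P : Type*) [Fintype P] [Nonempty P]
    (u ut : P → (Fin N → ℝ))
    (hu : ∀ μ, 0 < Real.sqrt (u μ ⬝ᵥ S.mulVec (u μ)))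
    (δ : ℝ) (hδ0 : 0 < δ) (hδ1 : δ < 1)
    (w : ℝ) (hw : Real.exp 1 < w)
    (hK : (2 * Real.log (2 * (Fintype.card P : ℝ)) + 2 * Real.log δ⁻¹)
            / Real.log (w / Real.exp 1) ≤ (K : ℝ))
    (hK3 : 3 ≤ K)
    (Δrel : P → Ω → ℝ)
    (hΔrel : ∀ μ ω, Δrel μ ω =
      Real.sqrt ((∑ i, (Z i ω ⬝ᵥ (u μ - ut μ)) ^ 2) / (∑ i, (Z i ω ⬝ᵥ u μ) ^ 2))) :
    ENNReal.ofReal (1 - δ) ≤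
      Pr {ω | ∀ μ : P,
        w⁻¹ * Δrel μ ω ≤
          Real.sqrt ((u μ - ut μ) ⬝ᵥ S.mulVec (u μ - ut μ))
            / Real.sqrt (u μ ⬝ᵥ S.mulVec (u μ))
        ∧ Real.sqrt ((u μ - ut μ) ⬝ᵥ S.mulVec (u μ - ut μ))
            / Real.sqrt (u μ ⬝ᵥ S.mulVec (u μ)) ≤ w * Δrel μ ω} :=
  stmt8_general Pr N K S Z hmeas hindep hgauss P u ut hu δ hδ0 w hw hK hK3 Δrel hΔrel
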